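/- (Fourier slice theorem for the discrete ridgelet transform) Let P be prime, f : (ZMod P)^D → ℝ, and r : ZMod P → ℝ. Define the discrete ridgelet transform R[f](a,b) = P^{-D/2} Σ_{x ∈ (ZMod P)^D} f(x) r(a·x − b). Then for every a ∈ (ZMod P)^D and v ∈ ZMod P, the one-dimensional Fourier transform of b ↦ R[f](a,b) evaluated at v equals F_D[f](v·a) · conj(F₁[r](v)), where F_D and F₁ are the D-dimensional and one-dimensional discrete Fourier transforms and v·a denotes scalar multiplication modulo P. -/

import Mathlib

/-- One-dimensional discrete Fourier transform over `ZMod P` of a real function. -/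
noncomputable def F1 (P : ℕ) [NeZero P] (r : ZMod P → ℝ) (v : ZMod P) : ℂ :=
  ((P : ℝ) ^ (-(1 : ℝ) / 2) : ℝ) *
    ∑ b : ZMod P, (r b : ℂ) *
      Complex.exp (-(2 * Real.pi * Complex.I) * (v.val : ℂ) * (b.val : ℂ) / (P : ℂ))

/-- `D`-dimensional discrete Fourier transform over `(ZMod P)^D` of a real function. -/
noncomputable def FD (P D : ℕ) [NeZero P] (f : (Fin D → ZMod P) → ℝ) (u : Fin D → ZMod P) : ℂ :=
  ((P : ℝ) ^ (-(D : ℝ) / 2) : ℝ) *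
    ∑ x : Fin D → ZMod P, (f x : ℂ) *
      Complex.exp (-(2 * Real.pi * Complex.I) * (∑ i, ((u i).val : ℂ) * ((x i).val : ℂ))
        / (P : ℂ))

/-- Discrete ridgelet transform. -/
noncomputable def ridgelet (P D : ℕ) [NeZero P] (r : ZMod P → ℝ)
    (f : (Fin D → ZMod P) → ℝ) (a : Fin D → ZMod P) (b : ZMod P) : ℝ :=
  (P : ℝ) ^ (-(D : ℝ) / 2) * ∑ x : Fin D → ZMod P, f x * r ((∑ i, a i * x i) - b)


open Complex Finset

noncomputable def Efun (P : ℕ) (n : ℤ) : ℂ :=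
  Complex.exp (-(2 * Real.pi * Complex.I) * (n : ℂ) / (P : ℂ))

lemma Efun_add (P : ℕ) (m n : ℤ) : Efun P (m + n) = Efun P m * Efun P n := by
  rw [Efun, Efun, Efun, ← Complex.exp_add]
  congr 1
  push_cast
  ring

lemma Efun_P_mul (P : ℕ) [NeZero P] (k : ℤ) : Efun P ((P : ℤ) * k) = 1 := by
  have hP : (P : ℂ) ≠ 0 := Nat.cast_ne_zero.mpr (NeZero.ne P)
  have h : Efun P ((P : ℤ) * k) = Complex.exp ((-k : ℤ) * (2 * Real.pi * Complex.I)) := by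
    rw [Efun]; congr 1; push_cast; field_simp
  rw [h, Complex.exp_int_mul_two_pi_mul_I]

lemma Efun_congr (P : ℕ) [NeZero P] {m n : ℤ} (h : ((m : ZMod P)) = (n : ZMod P)) :
    Efun P m = Efun P n := by
  have hd : ((P : ℤ)) ∣ (m - n) := by
    rwa [← ZMod.intCast_zmod_eq_zero_iff_dvd, Int.cast_sub, sub_eq_zero]
  obtain ⟨k, hk⟩ := hd
  have hm : m = n + (P : ℤ) * k := by omega
  rw [hm, Efun_add, Efun_P_mul, mul_one]

noncomputable def ezm (P : ℕ) [NeZero P] (t : ZMod P) : ℂ := Efun P (t.val : ℤ)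

lemma ezm_add (P : ℕ) [NeZero P] (s t : ZMod P) : ezm P (s + t) = ezm P s * ezm P t := by
  rw [ezm, ezm, ezm, ← Efun_add]
  apply Efun_congr
  push_cast
  simp [ZMod.natCast_val, ZMod.cast_id]

lemma conj_ezm (P : ℕ) [NeZero P] (t : ZMod P) :
    (starRingEnd ℂ) (ezm P t) = ezm P (-t) := by
  rw [ezm, ezm, Efun, ← Complex.exp_conj]
  have h : (starRingEnd ℂ) (-(2 * ↑Real.pi * Complex.I) * (((t.val : ℤ)) : ℂ) / (P : ℂ))
      = -(2 * ↑Real.pi * Complex.I) * (((-(t.val : ℤ)) : ℤ) : ℂ) / (P : ℂ) := by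
    simp only [map_div₀, map_mul, map_neg, Complex.conj_I, map_ofNat,
      map_intCast, map_natCast, Complex.conj_ofReal]
    push_cast
    ring
  rw [h]
  exact Efun_congr P (by push_cast; simp [ZMod.natCast_val, ZMod.cast_id])

lemma exp1 (P : ℕ) [NeZero P] (w b : ZMod P) :
    Complex.exp (-(2 * Real.pi * Complex.I) * (w.val : ℂ) * (b.val : ℂ) / (P : ℂ))
      = ezm P (w * b) := by
  have h1 : -(2 * (Real.pi : ℂ) * Complex.I) * (w.val : ℂ) * (b.val : ℂ) / (P : ℂ)
      = -(2 * (Real.pi : ℂ) * Complex.I) * (((w.val * b.val : ℤ)) : ℂ) / (P : ℂ) := by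
    push_cast; ring
  rw [h1]
  exact Efun_congr P (by push_cast; simp [ZMod.natCast_val, ZMod.cast_id])

lemma expD (P : ℕ) [NeZero P] (D : ℕ) (v : ZMod P) (a x : Fin D → ZMod P) :
    Complex.exp (-(2 * Real.pi * Complex.I) *
        (∑ i, (((v * a i).val : ℂ)) * ((x i).val : ℂ)) / (P : ℂ))
      = ezm P (v * ∑ i, a i * x i) := by
  have h1 : -(2 * (Real.pi : ℂ) * Complex.I) *
        (∑ i, (((v * a i).val : ℂ)) * ((x i).val : ℂ)) / (P : ℂ)
      = -(2 * (Real.pi : ℂ) * Complex.I) *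
        (((∑ i, ((v * a i).val * (x i).val) : ℤ)) : ℂ) / (P : ℂ) := by
    push_cast; ring
  rw [h1]
  refine Efun_congr P ?_
  push_cast
  simp [ZMod.natCast_val, ZMod.cast_id, Finset.mul_sum, mul_assoc]

set_option maxHeartbeats 1000000 in
theorem stmt5 (P : ℕ) [Fact (Nat.Prime P)] (D : ℕ)
    (f : (Fin D → ZMod P) → ℝ) (r : ZMod P → ℝ)
    (a : Fin D → ZMod P) (v : ZMod P) :
    F1 P (fun b => ridgelet P D r f a b) v
      = FD P D f (fun i => v * a i) * (starRingEnd ℂ) (F1 P r v) := by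
  classical
  set C1 : ℂ := (((P : ℝ) ^ (-(1 : ℝ) / 2) : ℝ) : ℂ) with hC1
  set CD : ℂ := (((P : ℝ) ^ (-(D : ℝ) / 2) : ℝ) : ℂ) with hCD
  set T : ℂ := ∑ c : ZMod P, (r c : ℂ) * ezm P (-(v * c)) with hT
  set s : (Fin D → ZMod P) → ZMod P := fun x => ∑ i, a i * x i with hs
  -- conjugate of F1
  have hF1r : (starRingEnd ℂ) (F1 P r v) = C1 * T := by
    rw [F1, map_mul, map_sum, Complex.conj_ofReal]
    congr 1
    refine Finset.sum_congr rfl fun c _ => ?_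
    rw [map_mul, Complex.conj_ofReal, exp1 P v c, conj_ezm]
  -- FD side
  have hFD : FD P D f (fun i => v * a i)
      = CD * ∑ x : Fin D → ZMod P, (f x : ℂ) * ezm P (v * s x) := by
    rw [FD]
    congr 1
    exact Finset.sum_congr rfl fun x _ => by rw [expD P D v a x]
  -- inner substitution
  have hinner : ∀ c : ZMod P,
      ∑ b : ZMod P, ((r (c - b) : ℂ)) * ezm P (v * b)
        = ezm P (v * c) * T := by
    intro c
    rw [hT, Finset.mul_sum]
    refine Fintype.sum_equiv (Equiv.subLeft c) _ _ fun b => ?_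
    simp only [Equiv.subLeft_apply]
    have h2 : v * c + -(v * (c - b)) = v * b := by ring
    rw [← h2, ezm_add]
    ring
  -- LHS
  rw [F1, hF1r, hFD]
  simp only [ridgelet]
  push_cast
  have step1 : ∑ b : ZMod P,
      (CD * ∑ x : Fin D → ZMod P, (f x : ℂ) * (r (s x - b) : ℂ)) *
        Complex.exp (-(2 * Real.pi * Complex.I) * (v.val : ℂ) * (b.val : ℂ) / (P : ℂ))
      = CD * ((∑ x : Fin D → ZMod P, (f x : ℂ) * ezm P (v * s x)) * T) := by
    have e1 : ∀ b : ZMod P,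
        (CD * ∑ x : Fin D → ZMod P, (f x : ℂ) * (r (s x - b) : ℂ)) *
          Complex.exp (-(2 * Real.pi * Complex.I) * (v.val : ℂ) * (b.val : ℂ) / (P : ℂ))
        = CD * ∑ x : Fin D → ZMod P, (f x : ℂ) * ((r (s x - b) : ℂ) * ezm P (v * b)) := by
      intro b
      rw [exp1 P v b, Finset.mul_sum, Finset.mul_sum, Finset.sum_mul]
      exact Finset.sum_congr rfl fun x _ => by ring
    rw [Finset.sum_congr rfl fun b _ => e1 b, ← Finset.mul_sum]
    congr 1
    rw [Finset.sum_comm, Finset.sum_mul]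
    refine Finset.sum_congr rfl fun x _ => ?_
    rw [← Finset.mul_sum, hinner (s x), mul_assoc]
  rw [step1]
  ring
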